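/- Let r ≥ 0 and suppose a sequence (x_n) in an S-metric space (X,S) is statistically convergent to x'. Then st-LIM^r x_n = B_S[x',r], the closed ball of radius r centered at x'. -/

import Mathlib

open Filter

open scoped Classical in
/-- Natural density: `A ⊆ ℕ` has density `d` if `|{k ∈ A : k < n}|/n → d`. -/
def HasDensity (A : Set ℕ) (d : ℝ) : Prop :=
  Filter.Tendsto
    (fun n : ℕ => (((Finset.range n).filter (fun k => k ∈ A)).card : ℝ) / n)
    Filter.atTop (nhds d)

/-- `S` is an S-metric on `X`. -/
structure IsSMetric {X : Type*} (S : X → X → X → ℝ) : Prop where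
  nonneg : ∀ x y z, 0 ≤ S x y z
  eq_zero_iff : ∀ x y z, S x y z = 0 ↔ x = y ∧ y = z
  triangle : ∀ x y z a, S x y z ≤ S x x a + S y y a + S z z a

/-- Ordinary convergence of a sequence in an S-metric space. -/
def SConvergesTo {X : Type*} (S : X → X → X → ℝ) (x : ℕ → X) (l : X) : Prop :=
  ∀ ε : ℝ, 0 < ε → ∃ N : ℕ, ∀ n ≥ N, S (x n) (x n) l < ε

/-- Statistical convergence of a sequence in an S-metric space. -/
def SStatConvergesTo {X : Type*} (S : X → X → X → ℝ) (x : ℕ → X) (l : X) : Prop :=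
  ∀ ε : ℝ, 0 < ε → HasDensity {n : ℕ | ε ≤ S (x n) (x n) l} 0

/-- Cauchy sequence in an S-metric space. -/
def SCauchy {X : Type*} (S : X → X → X → ℝ) (x : ℕ → X) : Prop :=
  ∀ ε : ℝ, 0 < ε → ∃ k : ℕ, ∀ n ≥ k, ∀ m ≥ k, S (x n) (x n) (x m) < ε

/-- Statistically Cauchy sequence in an S-metric space. -/
def SStatCauchy {X : Type*} (S : X → X → X → ℝ) (x : ℕ → X) : Prop :=
  ∀ ε : ℝ, 0 < ε → ∃ N : ℕ, HasDensity {n : ℕ | ε ≤ S (x n) (x n) (x N)} 0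

/-- Statistically bounded sequence in an S-metric space. -/
def SStatBounded {X : Type*} (S : X → X → X → ℝ) (x : ℕ → X) : Prop :=
  ∀ u : X, ∃ B : ℝ, 0 < B ∧ HasDensity {n : ℕ | B ≤ S (x n) (x n) u} 0

/-- Rough convergence with roughness degree `r`. -/
def SRoughConvergesTo {X : Type*} (S : X → X → X → ℝ) (r : ℝ) (x : ℕ → X) (p : X) : Prop :=
  ∀ ε : ℝ, 0 < ε → ∃ k : ℕ, ∀ n ≥ k, S (x n) (x n) p < r + ε

/-- Rough statistical convergence with roughness degree `r`. -/
def SRoughStatConvergesTo {X : Type*} (S : X → X → X → ℝ) (r : ℝ) (x : ℕ → X) (p : X) : Prop :=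
  ∀ ε : ℝ, 0 < ε → HasDensity {n : ℕ | r + ε ≤ S (x n) (x n) p} 0

/-- The rough statistical limit set `st-LIM^r x_n`. -/
def stLIM {X : Type*} (S : X → X → X → ℝ) (r : ℝ) (x : ℕ → X) : Set X :=
  {p : X | SRoughStatConvergesTo S r x p}

/-- The topology on `X` generated by the open balls of the S-metric. -/
def sBallTopology {X : Type*} (S : X → X → X → ℝ) : TopologicalSpace X :=
  TopologicalSpace.generateFrom
    {B : Set X | ∃ c : X, ∃ ε : ℝ, 0 < ε ∧ B = {y : X | S y y c < ε}}

/-!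
Taking two equal arguments in the triangle inequality gives
`S(a,a,b) ≤ 2 S(a,a,c) + S(b,b,c)`, and `S(a,a,b) = S(b,b,a)`. With `c = xₙ` these compare
rough statistical limits of different degrees: if `xₙ` is `r`-close to `p` and `s`-close to `q`
outside a set of density zero, then choosing one index outside both exceptional sets gives
`S(p,p,q) ≤ r + 2s`; conversely, if `p` is an `r`-rough statistical limit and
`S(q,q,p) ≤ s`, then `q` is a `(2r + s)`-rough one. Statistical convergence is the case of
degree `0`.
-/

namespace HasDensity

theorem mono {A B : Set ℕ} (hAB : A ⊆ B) (hB : HasDensity B 0) : HasDensity A 0 := by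
  refine tendsto_of_tendsto_of_tendsto_of_le_of_le tendsto_const_nhds hB (fun n => by positivity)
    fun n => ?_
  dsimp only
  gcongr

theorem union {A B : Set ℕ} (hA : HasDensity A 0) (hB : HasDensity B 0) :
    HasDensity (A ∪ B) 0 := by
  classical
  refine tendsto_of_tendsto_of_tendsto_of_le_of_le tendsto_const_nhds
    (by simpa using hA.add hB) (fun n => by positivity) fun n => ?_
  dsimp only
  rw [← add_div]
  gcongr
  refine mod_cast (Finset.card_le_card fun k hk => ?_).trans (Finset.card_union_le _ _)
  simp only [Finset.mem_filter, Finset.mem_union, Set.mem_union] at hk ⊢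
  tauto

theorem nonempty_compl {A : Set ℕ} (hA : HasDensity A 0) : Aᶜ.Nonempty := by
  by_contra hA'
  rw [Set.not_nonempty_iff_eq_empty, Set.compl_empty_iff] at hA'
  subst hA'
  have h1 : HasDensity Set.univ 1 :=
    tendsto_const_nhds.congr' <| (eventually_ne_atTop 0).mono fun n hn => by
      simp [div_self (Nat.cast_ne_zero.mpr hn : (n : ℝ) ≠ 0)]
  exact one_ne_zero (tendsto_nhds_unique h1 hA)

end HasDensity

namespace IsSMetric

variable {X : Type*} {S : X → X → X → ℝ}

theorem self_eq_zero (hS : IsSMetric S) (a : X) : S a a a = 0 :=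
  (hS.eq_zero_iff a a a).mpr ⟨rfl, rfl⟩

theorem symm (hS : IsSMetric S) (a b : X) : S a a b = S b b a := by
  have key : ∀ u v : X, S u u v ≤ S v v u := fun u v => by
    simpa [hS.self_eq_zero] using hS.triangle u u v u
  exact le_antisymm (key a b) (key b a)

theorem le_two_mul_add (hS : IsSMetric S) (a b c : X) : S a a b ≤ 2 * S a a c + S b b c := by
  linarith [hS.triangle a a b c]

end IsSMetric

section RoughStatistical

variable {X : Type*} {S : X → X → X → ℝ} {x : ℕ → X}

theorem sStatConvergesTo_iff_sRoughStatConvergesTo_zero {l : X} :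
    SStatConvergesTo S x l ↔ SRoughStatConvergesTo S 0 x l := by
  simp only [SStatConvergesTo, SRoughStatConvergesTo, zero_add]

theorem SRoughStatConvergesTo.of_le (hS : IsSMetric S) {r s : ℝ} {p q : X}
    (hp : SRoughStatConvergesTo S r x p) (hqp : S q q p ≤ s) :
    SRoughStatConvergesTo S (2 * r + s) x q := by
  intro ε hε
  refine (hp (ε / 2) (by positivity)).mono fun n hn => ?_
  simp only [Set.mem_ofPred_eq] at hn ⊢
  linarith [hS.le_two_mul_add (x n) q p]

theorem SRoughStatConvergesTo.le_add_two_mul (hS : IsSMetric S) {r s : ℝ} {p q : X}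
    (hp : SRoughStatConvergesTo S r x p) (hq : SRoughStatConvergesTo S s x q) :
    S p p q ≤ r + 2 * s := by
  refine le_of_forall_pos_lt_add fun ε hε => ?_
  obtain ⟨n, hn⟩ :=
    ((hp (ε / 3) (by positivity)).union (hq (ε / 3) (by positivity))).nonempty_compl
  simp only [Set.mem_compl_iff, Set.mem_union, Set.mem_ofPred_eq, not_or, not_le] at hn
  have htri := hS.le_two_mul_add q p (x n)
  rw [hS.symm q p, hS.symm q (x n), hS.symm p (x n)] at htri
  linarith

end RoughStatistical

theorem stmt_12_general {X : Type*} (S : X → X → X → ℝ) (hS : IsSMetric S)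
    (r : ℝ) (x : ℕ → X) (x' : X) (h : SStatConvergesTo S x x') :
    stLIM S r x = {y : X | S y y x' ≤ r} := by
  rw [sStatConvergesTo_iff_sRoughStatConvergesTo_zero] at h
  ext p
  constructor
  · intro (hp : SRoughStatConvergesTo S r x p)
    simpa [hS.symm p x'] using hp.le_add_two_mul hS h
  · intro (hp : S p p x' ≤ r)
    show SRoughStatConvergesTo S r x p
    simpa using h.of_le hS hp

theorem stmt_12 {X : Type*} [Nonempty X] (S : X → X → X → ℝ) (hS : IsSMetric S)
    (r : ℝ) (hr : 0 ≤ r) (x : ℕ → X) (x' : X) (h : SStatConvergesTo S x x') :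
    stLIM S r x = {y : X | S y y x' ≤ r} :=
  stmt_12_general S hS r x x' h
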